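/- arXiv:2506.13962 — 4 statements merged into one kernel-verified Lean document; each statement's English description precedes it below -/
import Mathlib

section
/- For every natural number n ≥ 3 divisible by 3, there exists a set A of n/3 + 2 partial transformations of an n-element set such that A admits a carefully synchronising word, and every carefully synchronising word for A has length at least 3^(n/3) + 1. -/
/-- Applying a word (list) of partial transformations of `Fin n` to a state `q`,
composing from left to right, with `none` (undefined) propagating. -/
def ptApply {n : ℕ} (w : List (Fin n → Option (Fin n))) (q : Fin n) : Option (Fin n) :=
  w.foldl (fun o f => o.bind f) (some q)

/-- A word `w` over the alphabet `A` is carefully synchronising: all its letters are in `A`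
and it maps every state to one common state `q₀`. -/
def CarefullySync {n : ℕ} (A : Finset (Fin n → Option (Fin n)))
    (w : List (Fin n → Option (Fin n))) : Prop :=
  (∀ g ∈ w, g ∈ A) ∧ ∃ q₀ : Fin n, ∀ q : Fin n, ptApply w q = some q₀

/-!
Take `n = 3 (k + 1)` states arranged in `k + 1` blocks of three, a state being a pair
(block, value). Besides `reset` and `finish` there is one letter `incr j` per block. Apart from
a permutation of all states when `k = 0`, a synchronising word has to begin with `reset`, after
which the reachable subsets are configurations: the states `(i, d i)` for all blocks `i`
together with `(last, d last + 1)`, where `d` is read as a number in base three. The letter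
`incr j` is defined on a configuration only when the digits below `j` are all `2` and digit `j`
is not (unless `j` is the top digit), and then it adds one to `d` at digit `j`; `finish` is
defined only on the configuration `22…2`. So a synchronising word has to count from `0` up to
`3 ^ (k + 1) - 1`.

For the lower bound, `3 ^ (k + 1) - digitVal d` is a potential on configurations that every
letter lowers by at most one. Resetting a configuration with top digit `2` drops the extra
state; on the resulting sets `graph d` only the lower `k` digits can still be counted, which
gives the smaller potential `3 ^ k - 1 - digitVal (Fin.init d)`.
-/

open Set

section PartialMaps

variable {α β : Type*}

def applyWord (w : List (α → Option α)) (a : α) : Option α :=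
  w.foldl (fun o f => o.bind f) (some a)

lemma applyWord_cons (g : α → Option α) (w : List (α → Option α)) (a : α) :
    applyWord (g :: w) a = (g a).bind (applyWord w) := by
  cases h : g a with
  | none => simp [applyWord, h, List.foldl_fixed' Option.bind_none]
  | some b => simp [applyWord, h]

def partialImage (g : α → Option α) (S : Set α) : Set α := {b | ∃ a ∈ S, g a = some b}

def DefinedOn (g : α → Option α) (S : Set α) : Prop := ∀ a ∈ S, g a ≠ none

def SyncsSet (w : List (α → Option α)) (S : Set α) : Prop := ∃ b, ∀ a ∈ S, applyWord w a = some b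

lemma DefinedOn.mono {g : α → Option α} {S T : Set α} (h : DefinedOn g T) (hST : S ⊆ T) :
    DefinedOn g S := fun a ha => h a (hST ha)

lemma partialImage_insert {g : α → Option α} {a b : α} (h : g a = some b) (S : Set α) :
    partialImage g (insert a S) = insert b (partialImage g S) := by
  ext c
  simp [partialImage, or_and_right, exists_or, h, eq_comm]

lemma partialImage_range {ι : Type*} {g : α → Option α} {φ ψ : ι → α}
    (h : ∀ i, g (φ i) = some (ψ i)) : partialImage g (range φ) = range ψ := by
  ext c
  simp [partialImage, h]

lemma subsingleton_of_syncsSet_nil {S : Set α} (h : SyncsSet [] S) : S.Subsingleton := by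
  obtain ⟨b, hb⟩ := h
  intro a ha a' ha'
  simpa [applyWord] using (hb a ha).trans (hb a' ha').symm

lemma syncsSet_cons_iff {g : α → Option α} {w : List (α → Option α)} {S : Set α} :
    SyncsSet (g :: w) S ↔ DefinedOn g S ∧ SyncsSet w (partialImage g S) := by
  simp only [SyncsSet, DefinedOn, applyWord_cons]
  constructor
  · rintro ⟨b, hb⟩
    refine ⟨fun a ha hga => by simpa [hga] using hb a ha, b, ?_⟩
    rintro c ⟨a, ha, hga⟩
    simpa [hga] using hb a ha
  · rintro ⟨hdef, b, hb⟩
    refine ⟨b, fun a ha => ?_⟩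
    obtain ⟨c, hc⟩ := Option.ne_none_iff_exists'.1 (hdef a ha)
    simpa [hc] using hb c ⟨a, ha, hc⟩

def Synchronisable (A : Set (α → Option α)) (S : Set α) : Prop :=
  ∃ w : List (α → Option α), (∀ g ∈ w, g ∈ A) ∧ SyncsSet w S

lemma Synchronisable.of_partialImage {A : Set (α → Option α)} {g : α → Option α} {S : Set α}
    (hg : g ∈ A) (hdef : DefinedOn g S) (h : Synchronisable A (partialImage g S)) :
    Synchronisable A S := by
  obtain ⟨w, hwA, hw⟩ := h
  exact ⟨g :: w, by simpa [hg] using hwA, syncsSet_cons_iff.2 ⟨hdef, hw⟩⟩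

theorem le_length_of_potential {A : Set (α → Option α)} (P : Set α → ℕ → Prop)
    (hbase : ∀ S N, P S N → S.Subsingleton → N = 0)
    (hstep : ∀ S N g, P S N → g ∈ A → DefinedOn g S →
      ∃ N', P (partialImage g S) N' ∧ N ≤ N' + 1)
    {w : List (α → Option α)} (hw : ∀ g ∈ w, g ∈ A) {S : Set α} {N : ℕ} (hP : P S N)
    (hsync : SyncsSet w S) : N ≤ w.length := by
  induction w generalizing S N with
  | nil => exact (hbase S N hP (subsingleton_of_syncsSet_nil hsync)).le
  | cons g w ih =>
    obtain ⟨hdef, hsync'⟩ := syncsSet_cons_iff.1 hsync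
    obtain ⟨N', hP', hN⟩ := hstep S N g hP (hw g List.mem_cons_self) hdef
    have := ih (fun g' hg' => hw g' (List.mem_cons_of_mem g hg')) hP' hsync'
    simp only [List.length_cons]
    omega

def conj (e : α ≃ β) : (α → Option α) ≃ (β → Option β) := e.arrowCongr e.optionCongr

@[simp] lemma conj_apply (e : α ≃ β) (g : α → Option α) (b : β) :
    conj e g b = (g (e.symm b)).map e := rfl

lemma applyWord_map_conj (e : α ≃ β) (w : List (α → Option α)) (a : α) :
    applyWord (w.map (conj e)) (e a) = (applyWord w a).map e := by
  induction w generalizing a with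
  | nil => rfl
  | cons g w ih =>
    simp only [List.map_cons, applyWord_cons, conj_apply, Equiv.symm_apply_apply]
    cases g a <;> simp [ih]

lemma syncsSet_univ_map_conj_iff (e : α ≃ β) {w : List (α → Option α)} :
    SyncsSet (w.map (conj e)) univ ↔ SyncsSet w univ := by
  constructor
  · rintro ⟨b, hb⟩
    refine ⟨e.symm b, fun a _ => ?_⟩
    have := hb (e a) trivial
    rw [applyWord_map_conj, Option.map_eq_some_iff] at this
    obtain ⟨c, hc, rfl⟩ := this
    simpa using hc
  · rintro ⟨b, hb⟩
    refine ⟨e b, fun q _ => ?_⟩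
    rw [← e.apply_symm_apply q, applyWord_map_conj, hb _ trivial, Option.map_some]

end PartialMaps

section Digits

variable {m b : ℕ}

def digitVal (d : Fin m → Fin b) : ℕ := ∑ i, (d i : ℕ) * b ^ (i : ℕ)

def incrAt (d : Fin m → Fin (b + 1)) (j : Fin m) : Fin m → Fin (b + 1) :=
  fun i => if i < j then 0 else if i = j then d i + 1 else d i

@[simp] lemma digitVal_zero [NeZero b] : digitVal (0 : Fin m → Fin b) = 0 := by
  simp [digitVal]

lemma digitVal_lt (d : Fin m → Fin b) : digitVal d < b ^ m := by
  rw [digitVal, ← finFunctionFinEquiv_apply]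
  exact Fin.is_lt _

lemma digitVal_succ (d : Fin (m + 1) → Fin b) :
    digitVal d = d 0 + b * digitVal (Fin.tail d) := by
  simp only [digitVal, Fin.sum_univ_succ, Fin.val_zero, pow_zero, mul_one, Finset.mul_sum,
    Fin.val_succ, pow_succ, Fin.tail]
  congr 1
  exact Finset.sum_congr rfl fun i _ => by ring

lemma digitVal_init (d : Fin (m + 1) → Fin b) :
    digitVal d = digitVal (Fin.init d) + d (Fin.last m) * b ^ m := by
  simp [digitVal, Fin.sum_univ_castSucc, Fin.init]

lemma digitVal_add_one_of_forall_eq_last {d : Fin m → Fin (b + 1)} (h : ∀ i, d i = Fin.last b) :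
    digitVal d + 1 = (b + 1) ^ m := by
  induction m with
  | zero => simp [digitVal]
  | succ m ih =>
    have := ih (d := Fin.tail d) fun i => h i.succ
    rw [digitVal_succ, h 0, Fin.val_last, pow_succ, ← this]
    ring

lemma digitVal_incrAt {d : Fin m → Fin (b + 1)} {j : Fin m} (hlow : ∀ i < j, d i = Fin.last b)
    (hj : d j ≠ Fin.last b) : digitVal (incrAt d j) = digitVal d + 1 := by
  induction m with
  | zero => exact j.elim0
  | succ m ih =>
    rw [digitVal_succ, digitVal_succ d]
    cases j using Fin.cases with
    | zero =>
      have htail : Fin.tail (incrAt d 0) = Fin.tail d := by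
        funext i; simp [incrAt, Fin.tail, Fin.succ_ne_zero]
      simp only [incrAt, lt_self_iff_false, ↓reduceIte, htail,
        Fin.val_add_one_of_lt (lt_of_le_of_ne (Fin.le_last _) hj)]
      ring
    | succ j =>
      have htail : Fin.tail (incrAt d j.succ) = incrAt (Fin.tail d) j := by
        funext i; simp [incrAt, Fin.tail]
      have h0 : d 0 = Fin.last b := hlow 0 (Fin.succ_pos j)
      rw [htail, ih (d := Fin.tail d) (fun i hi => hlow i.succ (Fin.succ_lt_succ_iff.2 hi)) hj]
      simp only [incrAt, Fin.succ_pos, ↓reduceIte, Fin.val_zero, h0, Fin.val_last]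
      ring

lemma init_incrAt_castSucc (d : Fin (m + 1) → Fin (b + 1)) (j : Fin m) :
    Fin.init (incrAt d j.castSucc) = incrAt (Fin.init d) j := by
  funext i; simp [incrAt, Fin.init]

end Digits

namespace CounterAutomaton

variable {k : ℕ}

abbrev State (k : ℕ) := Fin (k + 1) × Fin 3

def reset (p : State k) : Option (State k) :=
  some (p.1, if p.1 = Fin.last k ∧ p.2 ≠ 2 then p.2 else 0)

def incr (j : Fin (k + 1)) (p : State k) : Option (State k) :=
  if p.1 < j then (if p.2 = 2 then some (p.1, 0) else none)
  else if p.1 = j then (if p.2 = 2 ∧ j ≠ Fin.last k then none else some (p.1, p.2 + 1))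
  else some p

def finish (p : State k) : Option (State k) :=
  if (p.1 = Fin.last k ∧ p.2 ≠ 1) ∨ (p.1 ≠ Fin.last k ∧ p.2 = 2) then some (0, 0) else none

def alphabet (k : ℕ) : Finset (State k → Option (State k)) :=
  insert reset (insert finish (Finset.univ.image incr))

lemma mem_alphabet {g : State k → Option (State k)} :
    g ∈ alphabet k ↔ g = reset ∨ g = finish ∨ ∃ j, g = incr j := by
  simp [alphabet, eq_comm]

def graph (d : Fin (k + 1) → Fin 3) : Set (State k) := range fun i => (i, d i)

def config (d : Fin (k + 1) → Fin 3) : Set (State k) :=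
  insert (Fin.last k, d (Fin.last k) + 1) (graph d)

lemma graph_subset_config (d : Fin (k + 1) → Fin 3) : graph d ⊆ config d :=
  subset_insert _ _

lemma incr_apply_graph {d : Fin (k + 1) → Fin 3} {j : Fin (k + 1)} (hlow : ∀ i < j, d i = 2)
    (hj : j ≠ Fin.last k → d j ≠ 2) (i : Fin (k + 1)) :
    incr j (i, d i) = some (i, incrAt d j i) := by
  rcases lt_trichotomy i j with hij | rfl | hij
  · simp [incr, incrAt, hij, hlow i hij]
  · simp only [incr, incrAt, lt_self_iff_false, ↓reduceIte]
    exact if_neg fun h => hj h.2 h.1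
  · simp [incr, incrAt, hij.ne', not_lt_of_gt hij]

lemma incr_apply_config_top (d : Fin (k + 1) → Fin 3) (j : Fin (k + 1)) :
    incr j (Fin.last k, d (Fin.last k) + 1) =
      some (Fin.last k, incrAt d j (Fin.last k) + 1) := by
  rcases (Fin.le_last j).lt_or_eq with hj | rfl
  · simp [incr, incrAt, hj.ne', not_lt_of_gt hj]
  · simp [incr, incrAt]

lemma definedOn_incr_graph_iff {d : Fin (k + 1) → Fin 3} {j : Fin (k + 1)} :
    DefinedOn (incr j) (graph d) ↔ (∀ i < j, d i = 2) ∧ (j ≠ Fin.last k → d j ≠ 2) := by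
  refine ⟨fun h => ⟨fun i hij => ?_, fun hj hdj => ?_⟩, fun ⟨hlow, hj⟩ => ?_⟩
  · have := h _ ⟨i, rfl⟩
    by_contra hne
    simp [incr, hij, hne] at this
  · have := h _ ⟨j, rfl⟩
    simp [incr, hdj, hj] at this
  · rintro _ ⟨i, rfl⟩
    simp [incr_apply_graph hlow hj]

lemma partialImage_incr_graph {d : Fin (k + 1) → Fin 3} {j : Fin (k + 1)}
    (hlow : ∀ i < j, d i = 2) (hj : j ≠ Fin.last k → d j ≠ 2) :
    partialImage (incr j) (graph d) = graph (incrAt d j) :=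
  partialImage_range (incr_apply_graph hlow hj)

lemma partialImage_incr_config {d : Fin (k + 1) → Fin 3} {j : Fin (k + 1)}
    (hlow : ∀ i < j, d i = 2) (hj : j ≠ Fin.last k → d j ≠ 2) :
    partialImage (incr j) (config d) = config (incrAt d j) := by
  rw [config, partialImage_insert (incr_apply_config_top d j), partialImage_incr_graph hlow hj,
    config]

lemma definedOn_incr_config {d : Fin (k + 1) → Fin 3} {j : Fin (k + 1)}
    (hlow : ∀ i < j, d i = 2) (hj : j ≠ Fin.last k → d j ≠ 2) :
    DefinedOn (incr j) (config d) := by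
  rintro _ (rfl | hp)
  · simp [incr_apply_config_top]
  · exact definedOn_incr_graph_iff.2 ⟨hlow, hj⟩ _ hp

lemma reset_apply (i : Fin (k + 1)) (x : Fin 3) :
    reset (i, x) = some (i, if i = Fin.last k ∧ x ≠ 2 then x else 0) := rfl

lemma partialImage_reset_univ : partialImage reset (univ : Set (State k)) = config 0 := by
  ext ⟨i, y⟩
  simp only [partialImage, config, graph, mem_univ, true_and, mem_ofPred_eq, Prod.exists,
    reset_apply, Option.some.injEq, Prod.mk.injEq, exists_and_left, exists_eq_left,
    mem_insert_iff, mem_range, Pi.zero_apply, zero_add]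
  by_cases hi : i = Fin.last k
  · simp only [hi, true_and]
    revert y
    decide
  · simp [hi]

lemma partialImage_reset_graph (d : Fin (k + 1) → Fin 3) :
    partialImage reset (graph d) =
      graph (Fin.snoc 0 (if d (Fin.last k) = 2 then 0 else d (Fin.last k))) := by
  refine partialImage_range fun i => ?_
  induction i using Fin.lastCases with
  | last => by_cases h : d (Fin.last k) = 2 <;> simp [reset, h]
  | cast i => simp [reset, (Fin.castSucc_lt_last i).ne]

lemma partialImage_reset_config_of_ne {d : Fin (k + 1) → Fin 3} (h : d (Fin.last k) ≠ 2) :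
    partialImage reset (config d) = config 0 := by
  rw [config, partialImage_insert (reset_apply _ _), partialImage_reset_graph]
  ext ⟨i, y⟩
  simp only [graph, config]
  induction i using Fin.lastCases with
  | last =>
    simp only [ne_eq, true_and, ite_not, h, ↓reduceIte, mem_insert_iff, Prod.mk.injEq, mem_range,
      exists_eq_left, Fin.snoc_last, Pi.zero_apply, zero_add]
    generalize d (Fin.last k) = t at h
    revert t y
    decide
  | cast i => simp [(Fin.castSucc_lt_last i).ne]

lemma partialImage_reset_config_of_eq {d : Fin (k + 1) → Fin 3} (h : d (Fin.last k) = 2) :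
    partialImage reset (config d) = graph 0 := by
  rw [config, partialImage_insert (reset_apply _ _), partialImage_reset_graph]
  ext ⟨i, y⟩
  simp only [graph]
  induction i using Fin.lastCases with
  | last => simp [h]
  | cast i => simp [(Fin.castSucc_lt_last i).ne]

lemma finish_last_eq_none_iff {x : Fin 3} : finish (Fin.last k, x) = none ↔ x = 1 := by
  simp [finish]

lemma eq_two_of_definedOn_finish_graph {d : Fin (k + 1) → Fin 3} (h : DefinedOn finish (graph d))
    (i : Fin k) : d i.castSucc = 2 := by
  have := h _ ⟨i.castSucc, rfl⟩
  simpa [finish, (Fin.castSucc_lt_last i).ne] using this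

lemma eq_two_of_definedOn_finish_config {d : Fin (k + 1) → Fin 3}
    (h : DefinedOn finish (config d)) (i : Fin (k + 1)) : d i = 2 := by
  induction i using Fin.lastCases with
  | cast i => exact eq_two_of_definedOn_finish_graph (h.mono (graph_subset_config d)) i
  | last =>
    have h₁ := h _ (graph_subset_config d ⟨Fin.last k, rfl⟩)
    have h₂ := h _ (mem_insert _ _)
    rw [Ne, finish_last_eq_none_iff] at h₁ h₂
    generalize d (Fin.last k) = t at h₁ h₂ ⊢
    revert t
    decide

lemma syncsSet_finish_config {d : Fin (k + 1) → Fin 3} (h : ∀ i, d i = 2) :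
    SyncsSet [finish] (config d) := by
  refine ⟨(0, 0), ?_⟩
  rintro _ (rfl | ⟨i, rfl⟩)
  · simp [applyWord, finish, h]
  · by_cases hi : i = Fin.last k <;> simp [applyWord, finish, h, hi]

lemma partialImage_incr_univ {j : Fin (k + 1)} (h : DefinedOn (incr j) univ) :
    partialImage (incr j) univ = univ := by
  have hj : j = Fin.last k := by
    by_contra hj
    exact h (j, 2) trivial (by simp [incr, hj])
  have h0 : ¬ (0 : Fin (k + 1)) < j := fun h0 => h (0, 0) trivial (by simp [incr, h0])
  refine eq_univ_of_forall fun ⟨i, y⟩ => ⟨(i, y - 1), trivial, ?_⟩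
  obtain rfl : i = j := le_antisymm (hj ▸ Fin.le_last i) ((not_lt.1 h0).trans (Fin.zero_le i))
  simp [incr, hj]

/-- `zero` absorbs the steps after which the potential is at most one, such as `finish` on the
configuration `22…2`. -/
inductive LowerBound : Set (State k) → ℕ → Prop
  | zero (S : Set (State k)) : LowerBound S 0
  | univ : LowerBound univ (3 ^ (k + 1) + 1)
  | config (d : Fin (k + 1) → Fin 3) : LowerBound (config d) (3 ^ (k + 1) - digitVal d)
  | graph (d : Fin (k + 1) → Fin 3) : LowerBound (graph d) (3 ^ k - 1 - digitVal (Fin.init d))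

lemma LowerBound.eq_zero_of_subsingleton {S : Set (State k)} {N : ℕ} (h : LowerBound S N)
    (hS : S.Subsingleton) : N = 0 := by
  cases h with
  | zero => rfl
  | univ => exact absurd (hS (mem_univ (0, 0)) (mem_univ (0, 1))) (by simp)
  | config d =>
    refine absurd (hS (mem_insert _ _) (graph_subset_config d ⟨Fin.last k, rfl⟩)) ?_
    simp only [Prod.mk.injEq, true_and]
    generalize d (Fin.last k) = t
    revert t
    decide
  | graph d =>
    cases k with
    | zero => simp [digitVal]
    | succ k => exact absurd (hS ⟨0, rfl⟩ ⟨Fin.last _, rfl⟩) (by simp [Fin.ext_iff])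

lemma lowerBound_step_univ {g : State k → Option (State k)} (hg : g ∈ alphabet k)
    (hdef : DefinedOn g univ) :
    ∃ N, LowerBound (partialImage g univ) N ∧ 3 ^ (k + 1) + 1 ≤ N + 1 := by
  rcases mem_alphabet.1 hg with rfl | rfl | ⟨j, rfl⟩
  · rw [partialImage_reset_univ]
    exact ⟨_, .config 0, by simp⟩
  · exact absurd (finish_last_eq_none_iff.2 rfl) (hdef _ trivial)
  · rw [partialImage_incr_univ hdef]
    exact ⟨_, .univ, by omega⟩

lemma lowerBound_step_config (d : Fin (k + 1) → Fin 3) {g : State k → Option (State k)}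
    (hg : g ∈ alphabet k) (hdef : DefinedOn g (config d)) :
    ∃ N, LowerBound (partialImage g (config d)) N ∧ 3 ^ (k + 1) - digitVal d ≤ N + 1 := by
  rcases mem_alphabet.1 hg with rfl | rfl | ⟨j, rfl⟩
  · by_cases h : d (Fin.last k) = 2
    · rw [partialImage_reset_config_of_eq h]
      refine ⟨_, .graph 0, ?_⟩
      have hd := digitVal_init d
      rw [h, Fin.val_two] at hd
      rw [show Fin.init (0 : Fin (k + 1) → Fin 3) = 0 from rfl, digitVal_zero, pow_succ]
      omega
    · rw [partialImage_reset_config_of_ne h]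
      exact ⟨_, .config 0, by rw [digitVal_zero]; omega⟩
  · have : digitVal d + 1 = 3 ^ (k + 1) :=
      digitVal_add_one_of_forall_eq_last (eq_two_of_definedOn_finish_config hdef)
    exact ⟨0, .zero _, by omega⟩
  · obtain ⟨hlow, hj⟩ := definedOn_incr_graph_iff.1 (hdef.mono (graph_subset_config d))
    rw [partialImage_incr_config hlow hj]
    by_cases hdj : d j = 2
    · obtain rfl : j = Fin.last k := of_not_not fun h => hj h hdj
      have hall : ∀ i, d i = 2 := fun i => (Fin.le_last i).lt_or_eq.elim (hlow i) (· ▸ hdj)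
      have : digitVal d + 1 = 3 ^ (k + 1) := digitVal_add_one_of_forall_eq_last hall
      exact ⟨0, .zero _, by omega⟩
    · exact ⟨_, .config _, by rw [digitVal_incrAt hlow hdj]; omega⟩

lemma lowerBound_step_graph (d : Fin (k + 1) → Fin 3) {g : State k → Option (State k)}
    (hg : g ∈ alphabet k) (hdef : DefinedOn g (graph d)) :
    ∃ N, LowerBound (partialImage g (graph d)) N ∧
      3 ^ k - 1 - digitVal (Fin.init d) ≤ N + 1 := by
  rcases mem_alphabet.1 hg with rfl | rfl | ⟨j, rfl⟩
  · rw [partialImage_reset_graph]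
    exact ⟨_, .graph _, by rw [Fin.init_snoc, digitVal_zero]; omega⟩
  · have : digitVal (Fin.init d) + 1 = 3 ^ k :=
      digitVal_add_one_of_forall_eq_last (eq_two_of_definedOn_finish_graph hdef)
    exact ⟨0, .zero _, by omega⟩
  · obtain ⟨hlow, hj⟩ := definedOn_incr_graph_iff.1 hdef
    rcases Fin.eq_castSucc_or_eq_last j with ⟨j, rfl⟩ | rfl
    · rw [partialImage_incr_graph hlow hj]
      refine ⟨_, .graph _, ?_⟩
      rw [init_incrAt_castSucc, digitVal_incrAt (d := Fin.init d)
        (fun i hi => hlow _ (Fin.castSucc_lt_castSucc_iff.2 hi)) (hj (Fin.castSucc_lt_last j).ne)]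
      omega
    · have : digitVal (Fin.init d) + 1 = 3 ^ k :=
        digitVal_add_one_of_forall_eq_last fun i => hlow _ (Fin.castSucc_lt_last i)
      exact ⟨0, .zero _, by omega⟩

lemma LowerBound.step {S : Set (State k)} {N : ℕ} {g : State k → Option (State k)}
    (h : LowerBound S N) (hg : g ∈ alphabet k) (hdef : DefinedOn g S) :
    ∃ N', LowerBound (partialImage g S) N' ∧ N ≤ N' + 1 := by
  cases h with
  | zero => exact ⟨0, .zero _, by omega⟩
  | univ => exact lowerBound_step_univ hg hdef
  | config d => exact lowerBound_step_config d hg hdef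
  | graph d => exact lowerBound_step_graph d hg hdef

theorem le_length_of_syncsSet_univ {w : List (State k → Option (State k))}
    (hw : ∀ g ∈ w, g ∈ alphabet k) (h : SyncsSet w univ) : 3 ^ (k + 1) + 1 ≤ w.length :=
  le_length_of_potential (A := ↑(alphabet k)) LowerBound
    (fun _ _ => LowerBound.eq_zero_of_subsingleton) (fun _ _ _ hP hg => hP.step hg) hw .univ h

lemma synchronisable_config (d : Fin (k + 1) → Fin 3) :
    Synchronisable (alphabet k : Set (State k → Option (State k))) (config d) := by
  by_cases hall : ∀ i, d i = 2
  · exact ⟨[finish], by simp [mem_alphabet], syncsSet_finish_config hall⟩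
  · obtain ⟨j, hj, hmin⟩ := wellFounded_lt.has_min {i | d i ≠ 2} (not_forall.1 hall)
    have hlow : ∀ i < j, d i = 2 := fun i hi => not_not.1 fun h => hmin i h hi
    have hval : digitVal (incrAt d j) = digitVal d + 1 := digitVal_incrAt hlow hj
    have hlt : digitVal (incrAt d j) < 3 ^ (k + 1) := digitVal_lt _
    refine .of_partialImage (by simp [mem_alphabet]) (definedOn_incr_config hlow fun _ => hj) ?_
    rw [partialImage_incr_config hlow fun _ => hj]
    exact synchronisable_config (incrAt d j)
termination_by 3 ^ (k + 1) - digitVal d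

lemma synchronisable_univ : Synchronisable (alphabet k : Set (State k → Option (State k))) univ := by
  refine .of_partialImage (g := reset) (by simp [mem_alphabet]) (fun _ _ => by simp [reset]) ?_
  rw [partialImage_reset_univ]
  exact synchronisable_config 0

lemma incr_injective : Function.Injective (incr (k := k)) := by
  intro j j' h
  have hj := congrFun h (j, 0)
  by_contra hne
  rcases lt_or_gt_of_ne hne with hlt | hlt
  · simp [incr, hlt] at hj
  · simp [incr, not_lt_of_gt hlt, hlt.ne'] at hj

lemma alphabet_card : (alphabet k).card = k + 3 := by
  have hreset (j : Fin (k + 1)) : incr j ≠ reset := fun h => by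
    simpa [incr, reset] using congrFun h (j, 0)
  have hfinish (j : Fin (k + 1)) : incr j ≠ finish := fun h => by
    simpa [incr, finish] using congrFun h (j, 0)
  rw [alphabet, Finset.card_insert_of_notMem, Finset.card_insert_of_notMem,
    Finset.card_image_of_injective _ incr_injective, Finset.card_univ, Fintype.card_fin]
  · simpa using hfinish
  · simp only [Finset.mem_insert, Finset.mem_image, Finset.mem_univ, true_and, not_or, not_exists]
    refine ⟨fun h => ?_, hreset⟩
    simpa [reset, finish_last_eq_none_iff.2 rfl] using congrFun h (Fin.last k, 1)

end CounterAutomaton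

open CounterAutomaton

lemma carefullySync_map_conj_iff {α : Type*} {n : ℕ} (e : α ≃ Fin n)
    {A : Finset (α → Option α)} {w : List (α → Option α)} :
    CarefullySync (A.map (conj e).toEmbedding) (w.map (conj e)) ↔
      (∀ g ∈ w, g ∈ A) ∧ SyncsSet w univ := by
  have hsync : (∃ q₀, ∀ q, ptApply (w.map (conj e)) q = some q₀) ↔
      SyncsSet (w.map (conj e)) univ := by
    simp [SyncsSet, ptApply, applyWord]
  rw [CarefullySync, hsync, syncsSet_univ_map_conj_iff]
  simp [Finset.mem_map_equiv]

/-- For every `n ≥ 3` divisible by `3`, there is an alphabet of `n / 3 + 2` partial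
transformations of an `n`-element set admitting a carefully synchronising word, all of whose
carefully synchronising words have length at least `3 ^ (n / 3) + 1`. -/
theorem car_lower_bound_linear_alphabet (n : ℕ) (hn : 3 ≤ n) (hdvd : 3 ∣ n) :
    ∃ A : Finset (Fin n → Option (Fin n)),
      A.card = n / 3 + 2 ∧
      (∃ w, CarefullySync A w) ∧
      (∀ w, CarefullySync A w → 3 ^ (n / 3) + 1 ≤ w.length) := by
  obtain ⟨k, hk⟩ : ∃ k, n / 3 = k + 1 := ⟨n / 3 - 1, by omega⟩
  let e : State k ≃ Fin n := finProdFinEquiv.trans (finCongr (by omega))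
  refine ⟨(alphabet k).map (conj e).toEmbedding, ?_, ?_, fun w hw => ?_⟩
  · rw [Finset.card_map, alphabet_card, hk]
  · obtain ⟨w, hw⟩ := synchronisable_univ (k := k)
    exact ⟨w.map (conj e), (carefullySync_map_conj_iff e).2 hw⟩
  · obtain ⟨w, rfl⟩ : ∃ w', w = w'.map (conj e) := ⟨w.map (conj e).symm, by simp⟩
    obtain ⟨hwA, hsync⟩ := (carefullySync_map_conj_iff e).1 hw
    rw [List.length_map, hk]
    exact le_length_of_syncsSet_univ hwA hsync
end

section
/- For every natural number n ≥ 9 with n ≡ 4 (mod 5), there exist a set A of 2 partial transformations of an n-element set and a partial transformation f expressed by some nonempty word over A such that the depth of f with respect to A is at least 4^((n−4)/5); consequently the maximum diameter of a set of 2 partial transformations of an n-element set is at least 4^((n−4)/5). -/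
/-- A nonempty word `w` over the alphabet `A` expresses the partial transformation `f`. -/
def Expresses {n : ℕ} (A : Finset (Fin n → Option (Fin n)))
    (w : List (Fin n → Option (Fin n))) (f : Fin n → Option (Fin n)) : Prop :=
  w ≠ [] ∧ (∀ g ∈ w, g ∈ A) ∧ (fun q => ptApply w q) = f

open Polynomial Module in
theorem exists_pow_eq_sum_smul_pow {F K : Type*} [Field F] [Ring K] [Algebra F K]
    [FiniteDimensional F K] (g : K) {r : ℕ} (hr : finrank F K ≤ r) :
    ∃ c : Fin r → F, g ^ r = ∑ j, c j • g ^ (j : ℕ) := by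
  set p := X ^ (r - (minpoly F g).natDegree) * minpoly F g
  have hmonic : p.Monic := (monic_X_pow _).mul (minpoly.monic (IsIntegral.of_finite F g))
  have hdeg : p.natDegree = r := by
    have := minpoly.natDegree_le (A := F) g
    rw [(monic_X_pow _).natDegree_mul (minpoly.monic (IsIntegral.of_finite F g)),
      natDegree_X_pow]
    omega
  have hroot : aeval g p = 0 := by simp [p]
  refine ⟨fun j => -p.coeff j, ?_⟩
  rw [hmonic.as_sum, hdeg] at hroot
  simp only [map_add, map_sum, map_mul, map_pow, aeval_X, aeval_C] at hroot
  rw [← Fin.sum_univ_eq_sum_range (fun j => algebraMap F K (p.coeff j) * g ^ j)] at hroot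
  rw [eq_neg_of_add_eq_zero_left hroot, ← Finset.sum_neg_distrib]
  simp [Algebra.smul_def]

section PartialMaps

variable {α : Type*}

def partialRun (w : List (α → Option α)) (a : α) : Option α :=
  w.foldlM (fun a f => f a) a

theorem partialRun_cons (f : α → Option α) (w : List (α → Option α)) (a : α) :
    partialRun (f :: w) a = (f a).bind (partialRun w) := rfl

theorem ptApply_eq_partialRun {n : ℕ} (w : List (Fin n → Option (Fin n))) (q : Fin n) :
    ptApply w q = partialRun w q := by
  suffices ∀ o : Option (Fin n), w.foldl (fun o f => o.bind f) o = o.bind (partialRun w) from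
    this (some q)
  induction w with
  | nil => intro o; cases o <;> rfl
  | cons f w ih => intro o; cases o <;> simp [ih, partialRun_cons]

variable {β : Type*}

noncomputable def transport (e : α → β) (f : α → Option α) : β → Option β :=
  fun b => ((Function.partialInv e b).bind f).map e

variable {e : α → β}

theorem transport_apply (he : e.Injective) (f : α → Option α) (a : α) :
    transport e f (e a) = (f a).map e := by
  simp [transport, Function.partialInv_left he]

theorem transport_injective (he : e.Injective) : (transport (α := α) e).Injective := by
  intro f f' h
  funext a
  exact Option.map_injective he (by rw [← transport_apply he, ← transport_apply he, h])

theorem partialRun_map_transport (he : e.Injective) (w : List (α → Option α)) (a : α) :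
    partialRun (w.map (transport e)) (e a) = (partialRun w a).map e := by
  induction w generalizing a with
  | nil => rfl
  | cons f w ih =>
    simp only [List.map_cons, partialRun_cons, transport_apply he]
    cases f a <;> simp [ih]

end PartialMaps

section LFSR

variable {F : Type*} [CommSemiring F] {m : ℕ} (c : Fin (m + 1) → F)

def lfsrStep (v : Fin (m + 1) → F) : Fin (m + 1) → F :=
  Fin.cons 0 (Fin.init v) + v (Fin.last m) • c

def lfsrOutput : (Fin (m + 1) → F) → ℕ → List F
  | _, 0 => []
  | v, t + 1 => v (Fin.last m) :: lfsrOutput (lfsrStep c v) t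

@[simp] theorem length_lfsrOutput (v : Fin (m + 1) → F) (t : ℕ) :
    (lfsrOutput c v t).length = t := by
  induction t generalizing v <;> simp [lfsrOutput, *]

section Evaluation

variable {K : Type*} [Semiring K] [Algebra F K] {c}

theorem linearCombination_lfsrStep {g : K} (hc : g ^ (m + 1) = ∑ j, c j • g ^ (j : ℕ))
    (v : Fin (m + 1) → F) :
    Fintype.linearCombination F (fun j : Fin (m + 1) => g ^ (j : ℕ)) (lfsrStep c v) =
      g * Fintype.linearCombination F (fun j : Fin (m + 1) => g ^ (j : ℕ)) v := by
  have hshift : ∑ j, (Fin.cons 0 (Fin.init v) : Fin (m + 1) → F) j • g ^ (j : ℕ) =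
      ∑ i : Fin m, v i.castSucc • g ^ ((i : ℕ) + 1) := by
    simp [Fin.sum_univ_succ, Fin.init]
  simp only [lfsrStep, map_add, map_smul, Fintype.linearCombination_apply, ← hc, hshift,
    Finset.mul_sum, mul_smul_comm, ← pow_succ']
  rw [Fin.sum_univ_castSucc]
  simp

theorem linearCombination_iterate_lfsrStep {g : K} (hc : g ^ (m + 1) = ∑ j, c j • g ^ (j : ℕ))
    (t : ℕ) :
    Fintype.linearCombination F (fun j : Fin (m + 1) => g ^ (j : ℕ))
      ((lfsrStep c)^[t] (Pi.single 0 1)) = g ^ t := by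
  induction t with
  | zero => simp [Fintype.linearCombination_apply, Pi.single_apply]
  | succ t ih => rw [Function.iterate_succ_apply', linearCombination_lfsrStep hc, ih, pow_succ']

end Evaluation

variable [DecidableEq F]

def lfsrLetter (σ : F) (a : Fin (m + 1) × F) : Option (Fin (m + 1) × F) :=
  Fin.lastCases (if a.2 = σ then some (0, σ * c 0) else none)
    (fun i => some (i.succ, a.2 + σ * c i.succ)) a.1

theorem lfsrLetter_last_of_ne {σ x : F} (h : x ≠ σ) :
    lfsrLetter c σ (Fin.last m, x) = none := by
  simp [lfsrLetter, h]

theorem lfsrLetter_injective : (lfsrLetter c).Injective := by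
  intro σ τ h
  have := congrFun h (Fin.last m, σ)
  simp only [lfsrLetter, Fin.lastCases_last, ↓reduceIte] at this
  split_ifs at this with hστ
  exact hστ

theorem lfsrLetter_output_apply (v : Fin (m + 1) → F) (j : Fin (m + 1)) :
    lfsrLetter c (v (Fin.last m)) (j, v j) =
      some (finRotate _ j, lfsrStep c v (finRotate _ j)) := by
  cases j using Fin.lastCases with
  | last => simp [lfsrLetter, lfsrStep]
  | cast i => simp [lfsrLetter, lfsrStep, finRotate_apply, Fin.coeSucc_eq_succ, Fin.init]

theorem partialRun_lfsrOutput (v : Fin (m + 1) → F) (t : ℕ) (j : Fin (m + 1)) :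
    partialRun ((lfsrOutput c v t).map (lfsrLetter c)) (j, v j) =
      some ((finRotate _)^[t] j, (lfsrStep c)^[t] v ((finRotate _)^[t] j)) := by
  induction t generalizing v j with
  | zero => rfl
  | succ t ih =>
    simp only [lfsrOutput, List.map_cons, partialRun_cons, lfsrLetter_output_apply,
      Option.bind_some, ih, Function.iterate_succ_apply]

theorem eq_lfsrOutput_of_forall_ne_none (s : List F) (v : Fin (m + 1) → F)
    (h : ∀ j, partialRun (s.map (lfsrLetter c)) (j, v j) ≠ none) :
    s = lfsrOutput c v s.length := by
  induction s generalizing v with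
  | nil => rfl
  | cons σ s ih =>
    have hσ : σ = v (Fin.last m) := by
      by_contra hne
      apply h (Fin.last m)
      rw [List.map_cons, partialRun_cons, lfsrLetter_last_of_ne c (Ne.symm hne), Option.bind_none]
    subst hσ
    refine congrArg _ (ih _ fun i => ?_)
    obtain ⟨j, rfl⟩ := (finRotate (m + 1)).surjective i
    simpa [partialRun_cons, lfsrLetter_output_apply] using h j

theorem iterate_lfsrStep_eq_of_partialRun_eq (v : Fin (m + 1) → F) {s t : ℕ}
    (h : ∀ j, partialRun ((lfsrOutput c v s).map (lfsrLetter c)) (j, v j) =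
      partialRun ((lfsrOutput c v t).map (lfsrLetter c)) (j, v j)) :
    (lfsrStep c)^[s] v = (lfsrStep c)^[t] v := by
  funext i
  obtain ⟨j, rfl⟩ := (finRotate (m + 1)).surjective.iterate s i
  have := h j
  simp only [partialRun_lfsrOutput, Option.some.injEq, Prod.mk.injEq] at this
  rw [this.2, this.1]

theorem orderOf_le_length_of_partialRun_eq {K : Type*} [Semiring K] [Algebra F K] {u : Kˣ}
    (hc : (u : K) ^ (m + 1) = ∑ j, c j • (u : K) ^ (j : ℕ)) {s : List F} (hs : s ≠ [])
    (h : ∀ j, partialRun (s.map (lfsrLetter c)) (j, (Pi.single 0 1 : Fin (m + 1) → F) j) =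
      partialRun ((lfsrOutput c (Pi.single 0 1) (orderOf u)).map (lfsrLetter c))
        (j, (Pi.single 0 1 : Fin (m + 1) → F) j)) :
    orderOf u ≤ s.length := by
  have hforced : s = lfsrOutput c (Pi.single 0 1) s.length :=
    eq_lfsrOutput_of_forall_ne_none c s _ fun j => by simp [h, partialRun_lfsrOutput]
  rw [hforced] at h
  have hconf := iterate_lfsrStep_eq_of_partialRun_eq c _ h
  have hpow : u ^ s.length = u ^ orderOf u := by
    ext
    simpa only [Units.val_pow_eq_pow_val, linearCombination_iterate_lfsrStep hc] using
      congrArg (Fintype.linearCombination F fun j : Fin (m + 1) => (u : K) ^ (j : ℕ)) hconf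
  exact Nat.le_of_dvd (List.length_pos_iff.mpr hs)
    (orderOf_dvd_of_pow_eq_one (hpow.trans (pow_orderOf_eq_one u)))

end LFSR

theorem exists_alphabet_orderOf_le_depth {F K : Type*} [CommSemiring F] [Fintype F]
    [DecidableEq F] [Semiring K] [Algebra F K] [Finite K] {m : ℕ} {c : Fin (m + 1) → F}
    {u : Kˣ} (hc : (u : K) ^ (m + 1) = ∑ j, c j • (u : K) ^ (j : ℕ)) {n : ℕ}
    (hn : (m + 1) * Fintype.card F ≤ n) :
    ∃ A : Finset (Fin n → Option (Fin n)), A.card = Fintype.card F ∧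
      ∃ f : Fin n → Option (Fin n),
        (∃ w, Expresses A w f) ∧ (∀ w, Expresses A w f → orderOf u ≤ w.length) := by
  obtain ⟨e⟩ := Function.Embedding.nonempty_of_card_le (α := Fin (m + 1) × F) (β := Fin n)
    (by simpa using hn)
  set L : F → Fin n → Option (Fin n) := fun σ => transport e (lfsrLetter c σ)
  have hL : L.Injective := (transport_injective e.injective).comp (lfsrLetter_injective c)
  set W := lfsrOutput c (Pi.single 0 1) (orderOf u)
  refine ⟨Finset.univ.image L, by rw [Finset.card_image_of_injective _ hL, Finset.card_univ],
    fun q => ptApply (W.map L) q, ⟨W.map L, ?_, by simp, rfl⟩, ?_⟩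
  · rw [← List.length_pos_iff]
    simpa [W] using orderOf_pos u
  rintro w ⟨hne, hmem, hf⟩
  obtain ⟨s, rfl⟩ : w ∈ Set.range (List.map L) := by
    rw [Set.range_list_map]
    intro g hg
    simpa using hmem g hg
  rw [List.length_map]
  refine orderOf_le_length_of_partialRun_eq c hc (by simpa using hne) fun j => ?_
  have := congrFun hf (e (j, (Pi.single 0 1 : Fin (m + 1) → F) j))
  simp only [L, ← Function.comp_def, ← List.map_map, ptApply_eq_partialRun,
    partialRun_map_transport e.injective] at this
  exact Option.map_injective e.injective this

theorem diam_lower_bound_binary_general (n : ℕ) (hmod : n % 5 = 4) :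
    ∃ A : Finset (Fin n → Option (Fin n)),
      A.card = 2 ∧
      ∃ f : Fin n → Option (Fin n),
        (∃ w, Expresses A w f) ∧
        (∀ w, Expresses A w f → 4 ^ ((n - 4) / 5) ≤ w.length) := by
  obtain ⟨k, rfl⟩ : ∃ k, n = 5 * k + 4 := ⟨n / 5, by omega⟩
  obtain ⟨u, hu⟩ := IsCyclic.exists_generator (α := (GaloisField 2 (2 * k + 1))ˣ)
  obtain ⟨c, hc⟩ := exists_pow_eq_sum_smul_pow (F := ZMod 2) (u : GaloisField 2 (2 * k + 1))
    (GaloisField.finrank 2 (Nat.succ_ne_zero _)).le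
  obtain ⟨A, hA, f, hf, hdepth⟩ :=
    exists_alphabet_orderOf_le_depth hc (n := 5 * k + 4) (by rw [ZMod.card]; omega)
  refine ⟨A, by rwa [ZMod.card] at hA, f, hf, fun w hw => le_trans ?_ (hdepth w hw)⟩
  rw [orderOf_eq_card_of_forall_mem_zpowers hu, Nat.card_units,
    GaloisField.card 2 _ (Nat.succ_ne_zero _), show (5 * k + 4 - 4) / 5 = k by omega,
    pow_succ, pow_mul]
  have := Nat.one_le_pow k 4 (by norm_num)
  norm_num
  omega

/-- For every `n ≥ 9` with `n ≡ 4 (mod 5)`, there is an alphabet of `2` partial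
transformations of an `n`-element set and a partial transformation `f` expressed by some
nonempty word over it such that every nonempty word expressing `f` has length at least
`4 ^ ((n - 4) / 5)`; i.e. the depth of `f`, and hence the diameter of the alphabet,
is at least `4 ^ ((n - 4) / 5)`. -/
theorem diam_lower_bound_binary (n : ℕ) (hn : 9 ≤ n) (hmod : n % 5 = 4) :
    ∃ A : Finset (Fin n → Option (Fin n)),
      A.card = 2 ∧
      ∃ f : Fin n → Option (Fin n),
        (∃ w, Expresses A w f) ∧
        (∀ w, Expresses A w f → 4 ^ ((n - 4) / 5) ≤ w.length) :=
  diam_lower_bound_binary_general n hmod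
end

section
/- For every integer k ≥ 1, there exist a set A of (binom(2k, k) + 2) partial transformations of a 2k-element set and a total transformation f (a function defined on all of the 2k-element set) expressed by some nonempty word over A such that the depth of f with respect to A is at least binom(2k, k) · g(k), where g(k) is the maximum order of a permutation of a k-element set. -/
/-- The Landau function: the maximum order of a permutation of a `k`-element set. -/
noncomputable def landau (k : ℕ) : ℕ :=
  Finset.univ.sup fun σ : Equiv.Perm (Fin k) => orderOf σ

namespace ExponentialAlphabet

open Finset Function Equiv

section PartialTransformations

variable {n : ℕ}

lemma foldl_bind_none (w : List (Fin n → Option (Fin n))) :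
    w.foldl (fun o f => o.bind f) none = none := by
  induction w with
  | nil => rfl
  | cons x w ih => exact ih

lemma ptApply_cons (x : Fin n → Option (Fin n)) (w : List (Fin n → Option (Fin n)))
    (q : Fin n) : ptApply (x :: w) q = (x q).bind (ptApply w) := by
  rw [ptApply, List.foldl_cons, Option.bind_some]
  cases x q with
  | none => exact foldl_bind_none w
  | some q' => rfl

end PartialTransformations

lemma ofNat_add_one (m n : ℕ) [NeZero m] : Fin.ofNat m n + 1 = Fin.ofNat m (n + 1) := by
  ext
  simp [Fin.val_add, Nat.add_mod]

lemma ofNat_mul_right_eq_zero (m n : ℕ) [NeZero m] : Fin.ofNat m (m * n) = 0 := by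
  ext
  simp

variable {k : ℕ}

instance : NeZero k.centralBinom := ⟨Nat.centralBinom_ne_zero k⟩

def collapse (k : ℕ) (q : Fin (2 * k)) : Fin k :=
  ⟨q % k, Nat.mod_lt _ (by have := q.isLt; omega)⟩

lemma collapse_surjective (k : ℕ) : Surjective (collapse k) := fun y =>
  ⟨Fin.castLE (by omega) y, Fin.ext (Nat.mod_eq_of_lt y.isLt)⟩

lemma card_powersetCard_univ (k : ℕ) :
    (powersetCard k (univ : Finset (Fin (2 * k)))).card = k.centralBinom := by
  simp [Nat.centralBinom_eq_two_mul_choose]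

noncomputable def kSubsetEquiv (k : ℕ) :
    Fin k.centralBinom ≃ powersetCard k (univ : Finset (Fin (2 * k))) :=
  ((powersetCard k univ).equivFinOfCardEq (card_powersetCard_univ k)).symm

noncomputable def kSubset (j : Fin k.centralBinom) : Finset (Fin (2 * k)) :=
  kSubsetEquiv k j

lemma card_kSubset (j : Fin k.centralBinom) : (kSubset j).card = k :=
  (mem_powersetCard.mp (kSubsetEquiv k j).2).2

lemma kSubset_injective : Injective (kSubset (k := k)) :=
  Subtype.val_injective.comp (kSubsetEquiv k).injective

lemma exists_notMem_kSubset (hk : 1 ≤ k) (j : Fin k.centralBinom) : ∃ q, q ∉ kSubset j := by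
  by_contra! h
  have := card_le_card fun q (_ : q ∈ univ) => h q
  rw [card_kSubset, card_univ, Fintype.card_fin] at this
  omega

/-- Whenever possible the labelling is the inverse of `collapse`; this is what makes `reset` send
states to states (`reset_state`). -/
noncomputable def labelEquiv (j : Fin k.centralBinom) : Fin k ≃ kSubset j := by
  classical
  exact if h : Set.InjOn (collapse k) (kSubset j) then
    (Equiv.ofBijective (fun q : kSubset j => collapse k q)
      ((Fintype.bijective_iff_injective_and_card _).mpr
        ⟨fun a b hab => Subtype.ext (h a.2 b.2 hab), by simp [card_kSubset]⟩)).symm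
  else ((kSubset j).equivFinOfCardEq (card_kSubset j)).symm

noncomputable def label (j : Fin k.centralBinom) (y : Fin k) : Fin (2 * k) :=
  labelEquiv j y

lemma label_mem (j : Fin k.centralBinom) (y : Fin k) : label j y ∈ kSubset j :=
  (labelEquiv j y).2

lemma label_injective (j : Fin k.centralBinom) : Injective (label j) :=
  Subtype.val_injective.comp (labelEquiv j).injective

lemma exists_label_eq {j : Fin k.centralBinom} {q : Fin (2 * k)} (hq : q ∈ kSubset j) :
    ∃ y, label j y = q :=
  ⟨(labelEquiv j).symm ⟨q, hq⟩, by simp [label]⟩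

lemma collapse_label {j : Fin k.centralBinom} (h : Set.InjOn (collapse k) (kSubset j))
    (y : Fin k) : collapse k (label j y) = y := by
  classical
  simp only [label, labelEquiv, dif_pos h]
  exact Equiv.ofBijective_apply_symm_apply (fun q : kSubset j => collapse k q) _ y

def wrap (τ : Perm (Fin k)) (j : Fin k.centralBinom) : Perm (Fin k) :=
  if (j : ℕ) = k.centralBinom - 1 then τ else 1

noncomputable def step (τ : Perm (Fin k)) (j : Fin k.centralBinom) (q : Fin (2 * k)) :
    Option (Fin (2 * k)) :=
  if h : q ∈ kSubset j then some (label (j + 1) (wrap τ j ((labelEquiv j).symm ⟨q, h⟩)))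
  else none

noncomputable def reset (k : ℕ) (q : Fin (2 * k)) : Option (Fin (2 * k)) :=
  some (label 0 (collapse k q))

def undefined (k : ℕ) (_ : Fin (2 * k)) : Option (Fin (2 * k)) := none

noncomputable def alphabet (τ : Perm (Fin k)) : Finset (Fin (2 * k) → Option (Fin (2 * k))) :=
  insert (reset k) (insert (undefined k) (univ.image (step τ)))

section Alphabet

variable (τ : Perm (Fin k))

lemma step_label (j : Fin k.centralBinom) (y : Fin k) :
    step τ j (label j y) = some (label (j + 1) (wrap τ j y)) := by
  rw [step, dif_pos (label_mem j y)]
  congr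
  exact (labelEquiv j).symm_apply_apply y

lemma step_eq_none {j : Fin k.centralBinom} {q : Fin (2 * k)} (hq : q ∉ kSubset j) :
    step τ j q = none :=
  dif_neg hq

lemma isSome_step_iff (j : Fin k.centralBinom) (q : Fin (2 * k)) :
    (step τ j q).isSome ↔ q ∈ kSubset j := by
  by_cases h : q ∈ kSubset j <;> simp [step, h]

lemma step_injective : Injective (step τ) := fun i j h =>
  kSubset_injective <| Finset.ext fun q => by rw [← isSome_step_iff τ, ← isSome_step_iff τ, h]

lemma card_alphabet (hk : 1 ≤ k) : (alphabet τ).card = k.centralBinom + 2 := by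
  have hundef : undefined k ∉ univ.image (step τ) := by
    simp only [mem_image, mem_univ, true_and, not_exists]
    intro i h
    simpa [step_label, undefined] using congrFun h (label i ⟨0, hk⟩)
  have hreset : reset k ∉ insert (undefined k) (univ.image (step τ)) := by
    simp only [mem_insert, mem_image, mem_univ, true_and, not_or, not_exists]
    refine ⟨fun h => by simpa [reset, undefined] using congrFun h ⟨0, by omega⟩, fun i h => ?_⟩
    obtain ⟨q, hq⟩ := exists_notMem_kSubset hk i
    simpa [reset, step_eq_none τ hq] using congrFun h q
  rw [alphabet, card_insert_of_notMem hreset, card_insert_of_notMem hundef,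
    card_image_of_injective _ (step_injective τ), card_univ, Fintype.card_fin]

end Alphabet

noncomputable def state (τ : Perm (Fin k)) (n : ℕ) (q : Fin (2 * k)) : Fin (2 * k) :=
  label (Fin.ofNat _ n) ((τ ^ (n / k.centralBinom)) (collapse k q))

noncomputable def target (τ : Perm (Fin k)) : Fin (2 * k) → Fin (2 * k) :=
  state τ (k.centralBinom * orderOf τ - 1)

section States

variable (τ : Perm (Fin k))

lemma wrap_pow_div (n : ℕ) (y : Fin k) :
    wrap τ (Fin.ofNat _ n) ((τ ^ (n / k.centralBinom)) y) =
      (τ ^ ((n + 1) / k.centralBinom)) y := by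
  have hC := Nat.centralBinom_pos k
  obtain ⟨t, r, hr, rfl⟩ : ∃ t r, r < k.centralBinom ∧ n = k.centralBinom * t + r :=
    ⟨_, _, Nat.mod_lt n hC, (Nat.div_add_mod n _).symm⟩
  rw [wrap, Fin.val_ofNat, Nat.mul_add_mod, Nat.mod_eq_of_lt hr, Nat.mul_add_div hC,
    Nat.div_eq_of_lt hr, add_zero]
  split_ifs with h
  · rw [show k.centralBinom * t + r + 1 = k.centralBinom * (t + 1) by rw [mul_add, mul_one]; omega,
      Nat.mul_div_cancel_left _ hC, pow_succ', Perm.mul_apply]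
  · rw [add_assoc, Nat.mul_add_div hC, Nat.div_eq_of_lt (by omega), add_zero, Perm.one_apply]

lemma step_state (n : ℕ) (q : Fin (2 * k)) :
    step τ (Fin.ofNat _ n) (state τ n q) = some (state τ (n + 1) q) := by
  rw [state, step_label, wrap_pow_div, state, ofNat_add_one]

lemma reset_eq_state_zero (q : Fin (2 * k)) : reset k q = some (state τ 0 q) := by
  simp [reset, state]

lemma reset_state {n : ℕ}
    (h : Set.InjOn (collapse k) (kSubset (Fin.ofNat k.centralBinom n) : Set (Fin (2 * k))))
    (q : Fin (2 * k)) :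
    reset k (state τ n q) = some (state τ (k.centralBinom * (n / k.centralBinom)) q) := by
  rw [reset, state, collapse_label h, state, ofNat_mul_right_eq_zero,
    Nat.mul_div_cancel_left _ (Nat.centralBinom_pos k)]

lemma state_mem (n : ℕ) (q : Fin (2 * k)) : state τ n q ∈ kSubset (Fin.ofNat _ n) :=
  label_mem _ _

lemma exists_state_eq {n : ℕ} {q : Fin (2 * k)} (hq : q ∈ kSubset (Fin.ofNat _ n)) :
    ∃ r, state τ n r = q := by
  obtain ⟨y, rfl⟩ := exists_label_eq hq
  obtain ⟨r, hr⟩ := ((τ ^ (n / k.centralBinom)).surjective.comp (collapse_surjective k)) y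
  exact ⟨r, congrArg _ hr⟩

lemma state_eq_state_iff {n : ℕ} {r₁ r₂ : Fin (2 * k)} :
    state τ n r₁ = state τ n r₂ ↔ collapse k r₁ = collapse k r₂ :=
  (label_injective _).eq_iff.trans (Equiv.apply_eq_iff_eq _)

lemma image_state (n : ℕ) : univ.image (state τ n) = kSubset (Fin.ofNat _ n) := by
  ext q
  constructor
  · intro hq
    obtain ⟨r, -, rfl⟩ := mem_image.mp hq
    exact state_mem τ n r
  · intro hq
    obtain ⟨r, rfl⟩ := exists_state_eq τ hq
    exact mem_image_of_mem _ (mem_univ r)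

/-- The index of a state is determined modulo `C m`, by its image modulo `C` and by its power of
`τ` modulo `m`. -/
lemma le_of_state_eq_target {n : ℕ} (h : state τ n = target τ) :
    k.centralBinom * orderOf τ - 1 ≤ n := by
  have hpos : 0 < k.centralBinom * orderOf τ :=
    Nat.mul_pos (Nat.centralBinom_pos k) (orderOf_pos τ)
  have hj : Fin.ofNat k.centralBinom n = Fin.ofNat _ (k.centralBinom * orderOf τ - 1) :=
    kSubset_injective (by rw [← image_state τ, h, target, image_state])
  have hmod : n % k.centralBinom = (k.centralBinom * orderOf τ - 1) % k.centralBinom :=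
    congrArg Fin.val hj
  have hpow :
      τ ^ (n / k.centralBinom) = τ ^ ((k.centralBinom * orderOf τ - 1) / k.centralBinom) := by
    ext y
    obtain ⟨r, rfl⟩ := collapse_surjective k y
    have := congrFun h r
    rw [target, state, state, hj] at this
    exact congrArg Fin.val (label_injective _ this)
  have := Nat.mod_le n (k.centralBinom * orderOf τ)
  rwa [Nat.mod_mul, hmod, pow_eq_pow_iff_modEq.mp hpow, ← Nat.mod_mul,
    Nat.mod_eq_of_lt (Nat.sub_lt hpos one_pos)] at this

end States

section Words

variable (τ : Perm (Fin k))

noncomputable def steps (a d : ℕ) : List (Fin (2 * k) → Option (Fin (2 * k))) :=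
  (List.range' a d).map fun i => step τ (Fin.ofNat _ i)

lemma ptApply_steps (a d : ℕ) (q : Fin (2 * k)) :
    ptApply (steps τ a d) (state τ a q) = some (state τ (a + d) q) := by
  induction d generalizing a with
  | zero => rfl
  | succ d ih =>
    rw [steps, List.range'_succ, List.map_cons, ptApply_cons, step_state, Option.bind_some,
      show a + (d + 1) = a + 1 + d by omega]
    exact ih (a + 1)

lemma expresses_target :
    Expresses (alphabet τ) (reset k :: steps τ 0 (k.centralBinom * orderOf τ - 1))
      (fun q => some (target τ q)) := by
  refine ⟨List.cons_ne_nil _ _, fun x hx => ?_, funext fun q => ?_⟩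
  · simp only [steps, List.mem_cons, List.mem_map] at hx
    rcases hx with rfl | ⟨i, -, rfl⟩ <;> simp [alphabet]
  · rw [ptApply_cons, reset_eq_state_zero τ, Option.bind_some, ptApply_steps, zero_add, target]

lemma injOn_of_ptApply_reset_cons {v : List (Fin (2 * k) → Option (Fin (2 * k)))} {n : ℕ}
    (h : ∀ q, ptApply (reset k :: v) (state τ n q) = some (target τ q)) :
    Set.InjOn (collapse k) (kSubset (Fin.ofNat k.centralBinom n) : Set (Fin (2 * k))) := by
  intro q₁ hq₁ q₂ hq₂ hcollapse
  obtain ⟨r₁, rfl⟩ := exists_state_eq τ hq₁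
  obtain ⟨r₂, rfl⟩ := exists_state_eq τ hq₂
  have htarget : target τ r₁ = target τ r₂ := by
    apply Option.some_injective
    rw [← h, ← h, ptApply_cons, ptApply_cons, reset, reset, hcollapse]
  exact (state_eq_state_iff τ).mpr ((state_eq_state_iff τ).mp htarget)

lemma eq_of_step_state_ne_none {i : Fin k.centralBinom} {n : ℕ}
    (h : ∀ q, step τ i (state τ n q) ≠ none) : i = Fin.ofNat _ n := by
  have hsub : kSubset (Fin.ofNat _ n) ⊆ kSubset i := fun q hq => by
    obtain ⟨r, rfl⟩ := exists_state_eq τ hq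
    by_contra hr
    exact h r (step_eq_none τ hr)
  exact kSubset_injective (eq_of_subset_of_card_le hsub (by rw [card_kSubset, card_kSubset])).symm

lemma le_add_length_of_ptApply_state (hk : 1 ≤ k) {u : List (Fin (2 * k) → Option (Fin (2 * k)))}
    (hu : ∀ x ∈ u, x ∈ alphabet τ) {n : ℕ}
    (h : ∀ q, ptApply u (state τ n q) = some (target τ q)) :
    k.centralBinom * orderOf τ - 1 ≤ n + u.length := by
  induction u generalizing n with
  | nil => exact le_of_state_eq_target τ (funext fun q => Option.some_injective _ (h q))
  | cons x v ih =>
    have hv : ∀ y ∈ v, y ∈ alphabet τ := fun y hy => hu y (List.mem_cons_of_mem _ hy)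
    have hx := hu x List.mem_cons_self
    simp only [alphabet, mem_insert, mem_image, mem_univ, true_and] at hx
    rw [List.length_cons]
    rcases hx with rfl | rfl | ⟨i, rfl⟩
    · have hinj := injOn_of_ptApply_reset_cons τ h
      have := ih hv fun q => by simpa [ptApply_cons, reset_state τ hinj] using h q
      have := Nat.mul_div_le n k.centralBinom
      omega
    · simpa [ptApply_cons, undefined] using h ⟨0, by omega⟩
    · obtain rfl : i = Fin.ofNat _ n :=
        eq_of_step_state_ne_none τ fun q hq => by simpa [ptApply_cons, hq] using h q
      have := ih hv (n := n + 1) fun q => by rw [← h q, ptApply_cons, step_state, Option.bind_some]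
      omega

lemma le_length_of_expresses_target (hk : 1 ≤ k) {w : List (Fin (2 * k) → Option (Fin (2 * k)))}
    (hw : Expresses (alphabet τ) w (fun q => some (target τ q))) :
    k.centralBinom * orderOf τ ≤ w.length := by
  obtain ⟨hne, hmem, heq⟩ := hw
  obtain ⟨x, v, rfl⟩ := List.exists_cons_of_ne_nil hne
  have h q : ptApply (x :: v) q = some (target τ q) := congrFun heq q
  have hx := hmem x List.mem_cons_self
  simp only [alphabet, mem_insert, mem_image, mem_univ, true_and] at hx
  rcases hx with rfl | rfl | ⟨i, rfl⟩
  · have := le_add_length_of_ptApply_state τ hk (fun y hy => hmem y (List.mem_cons_of_mem _ hy))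
      (n := 0) fun q => by simpa [ptApply_cons, reset_eq_state_zero τ] using h q
    rw [List.length_cons]
    omega
  · simpa [ptApply_cons, undefined] using h ⟨0, by omega⟩
  · obtain ⟨q, hq⟩ := exists_notMem_kSubset hk i
    simpa [ptApply_cons, step_eq_none τ hq] using h q

end Words

end ExponentialAlphabet

/-- For every `k ≥ 1`, there is an alphabet of `(2k choose k) + 2` partial transformations
of a `2k`-element set and a total transformation `f` of the `2k`-element set expressed by
some nonempty word over it, such that every nonempty word expressing `f` has length at least
`(2k choose k) · g(k)`, where `g` is the Landau function. -/
theorem diam_lower_bound_exponential_alphabet (k : ℕ) (hk : 1 ≤ k) :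
    ∃ A : Finset (Fin (2 * k) → Option (Fin (2 * k))),
      A.card = Nat.choose (2 * k) k + 2 ∧
      ∃ f : Fin (2 * k) → Fin (2 * k),
        (∃ w, Expresses A w (fun q => some (f q))) ∧
        (∀ w, Expresses A w (fun q => some (f q)) →
          Nat.choose (2 * k) k * landau k ≤ w.length) := by
  obtain ⟨τ, -, hτ⟩ := Finset.exists_mem_eq_sup Finset.univ Finset.univ_nonempty
    fun σ : Equiv.Perm (Fin k) => orderOf σ
  rw [← Nat.centralBinom_eq_two_mul_choose]
  refine ⟨ExponentialAlphabet.alphabet τ, ExponentialAlphabet.card_alphabet τ hk,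
    ExponentialAlphabet.target τ, ⟨_, ExponentialAlphabet.expresses_target τ⟩, fun w hw => ?_⟩
  rw [landau, hτ]
  exact ExponentialAlphabet.le_length_of_expresses_target τ hk hw
end

section
/- For every natural number n ≥ 9 with n ≡ 4 (mod 5), there exist two n × n matrices M₁, M₂ with entries in {0, 1} ⊆ ℕ such that the multiplicative semigroup generated by {M₁, M₂} is finite, and some element of this semigroup has depth at least 4^((n−4)/5) with respect to the generators {M₁, M₂} (i.e., every product of generators equal to this element has length at least 4^((n−4)/5)). -/
/-!
A partial transformation of `Fin n` is a `0`-`1` matrix, and composing partial transformations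
multiplies their matrices; so two partial transformations generate a finite semigroup, and it
suffices to find two whose semigroup has a deep element.

The two partial transformations run a base-`B` counter with `R - 1` digits. `R` points, the
tokens, move through `B * (R + 1) + R` states: one token is a clock of period `R`, the others
hold the digits, and in every sweep of `R` steps the digits are processed one per letter, which
adds one to the counter. At each time exactly one letter keeps every token alive, namely the
carry into the digit being processed; the other letter sends some token nowhere. Hence a word
whose product is defined at all tokens is a prefix of one fixed infinite word and moves each
token along its trajectory. The product of the prefix of length `R * (B ^ (R - 1) - 1)` leaves
the counter at `B ^ (R - 1) - 1`, a value that no shorter prefix reaches. Taking `B = 4` and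
`R = (n - 4) / 5`, or `B = 2` for small `n`, gives depth at least `4 ^ ((n - 4) / 5)`; for
`n = 9` a cycle of length `9` suffices.
-/

theorem List.exists_map_eq_of_forall_mem_or {X : Type*} (A : Bool → X) (w : List X)
    (hw : ∀ x ∈ w, x = A false ∨ x = A true) : ∃ bs : List Bool, bs.map A = w := by
  induction w with
  | nil => exact ⟨[], rfl⟩
  | cons x w ih =>
    obtain ⟨bs, rfl⟩ := ih fun y hy => hw y (List.mem_cons_of_mem x hy)
    rcases hw x List.mem_cons_self with rfl | rfl
    exacts [⟨false :: bs, rfl⟩, ⟨true :: bs, rfl⟩]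

namespace BinaryDepth

section PartialMatrix

variable {l m n : Type*} [DecidableEq n]

def partialMatrix (f : m → Option n) : Matrix m n ℕ :=
  Matrix.of fun p q => if f p = some q then 1 else 0

lemma partialMatrix_apply (f : m → Option n) (p : m) (q : n) :
    partialMatrix f p q = if f p = some q then 1 else 0 := rfl

lemma partialMatrix_apply_eq_zero_or_one (f : m → Option n) (p : m) (q : n) :
    partialMatrix f p q = 0 ∨ partialMatrix f p q = 1 := by
  rw [partialMatrix_apply]
  split_ifs <;> simp

lemma partialMatrix_injective : Function.Injective (partialMatrix : (m → Option n) → _) := by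
  intro f g h
  funext p
  have hpq (q : n) : f p = some q ↔ g p = some q := by
    have := congrFun (congrFun h p) q
    simp only [partialMatrix_apply] at this
    split_ifs at this <;> simp_all
  exact Option.ext hpq

lemma partialMatrix_some : partialMatrix (some : n → Option n) = 1 := by
  ext p q
  simp [partialMatrix, Matrix.one_apply]

lemma partialMatrix_mul [Fintype m] [DecidableEq m] (f : l → Option m) (g : m → Option n) :
    partialMatrix f * partialMatrix g = partialMatrix fun p => (f p).bind g := by
  ext p q
  rcases hfp : f p with _ | r
  · simp [partialMatrix, Matrix.mul_apply, hfp]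
  · rw [Matrix.mul_apply,
      Finset.sum_eq_single r (fun j _ hj => by simp [partialMatrix, hfp, hj.symm]) (by simp)]
    simp [partialMatrix, hfp]

end PartialMatrix

def run {α β : Type*} (f : β → α → Option α) : List β → α → Option α
  | [], x => some x
  | b :: bs, x => (f b x).bind (run f bs)

section Words

variable {α : Type*} [DecidableEq α] (f : Bool → α → Option α)

lemma forall_mem_map_partialMatrix (bs : List Bool) :
    ∀ X ∈ bs.map fun b => partialMatrix (f b),
      X = partialMatrix (f false) ∨ X = partialMatrix (f true) := by
  rintro _ hX
  obtain ⟨b, -, rfl⟩ := List.mem_map.mp hX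
  cases b <;> simp

variable [Fintype α]

lemma prod_map_partialMatrix (bs : List Bool) :
    (bs.map fun b => partialMatrix (f b)).prod = partialMatrix (run f bs) := by
  induction bs with
  | nil => exact partialMatrix_some.symm
  | cons b bs ih => rw [List.map_cons, List.prod_cons, ih, partialMatrix_mul]; rfl

lemma exists_prod_eq_partialMatrix_run {w : List (Matrix α α ℕ)}
    (hw : ∀ X ∈ w, X = partialMatrix (f false) ∨ X = partialMatrix (f true)) :
    ∃ bs : List Bool, bs.length = w.length ∧ w.prod = partialMatrix (run f bs) := by
  obtain ⟨bs, rfl⟩ := List.exists_map_eq_of_forall_mem_or (fun b => partialMatrix (f b)) w hw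
  exact ⟨bs, (List.length_map _).symm, prod_map_partialMatrix f bs⟩

lemma finite_setOf_prod_partialMatrix :
    {M : Matrix α α ℕ | ∃ w : List (Matrix α α ℕ), w ≠ [] ∧
      (∀ X ∈ w, X = partialMatrix (f false) ∨ X = partialMatrix (f true)) ∧ w.prod = M}.Finite := by
  refine (Set.finite_range (partialMatrix : (α → Option α) → _)).subset ?_
  rintro M ⟨w, -, hw, rfl⟩
  obtain ⟨bs, -, hprod⟩ := exists_prod_eq_partialMatrix_run f hw
  exact ⟨_, hprod.symm⟩

end Words

section ForcedRun

variable {α ι : Type*} (f : Bool → α → Option α) (ℓ : ℕ → Bool) (c : ι → ℕ → α)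

lemma run_map_range' (hstep : ∀ i τ, f (ℓ τ) (c i τ) = some (c i (τ + 1))) (i : ι) (τ k : ℕ) :
    run f ((List.range' τ k).map ℓ) (c i τ) = some (c i (τ + k)) := by
  induction k generalizing τ with
  | zero => rfl
  | succ k ih =>
    rw [List.range'_succ, List.map_cons, run, hstep, Option.bind_some, ih,
      Nat.add_right_comm, Nat.add_assoc]

lemma run_eq_some_of_ne_none (hstep : ∀ i τ, f (ℓ τ) (c i τ) = some (c i (τ + 1)))
    (hkill : ∀ τ, ∃ i, f (!ℓ τ) (c i τ) = none) (bs : List Bool) (τ : ℕ)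
    (halive : ∀ i, run f bs (c i τ) ≠ none) (i : ι) :
    run f bs (c i τ) = some (c i (τ + bs.length)) := by
  induction bs generalizing τ with
  | nil => rfl
  | cons b bs ih =>
    have hb : b = ℓ τ := by
      by_contra hne
      obtain ⟨j, hj⟩ := hkill τ
      rw [← Bool.eq_not_of_ne hne] at hj
      exact halive j (by rw [run, hj, Option.bind_none])
    subst hb
    simp only [run, hstep, Option.bind_some] at halive ⊢
    rw [ih (τ + 1) halive, List.length_cons, Nat.add_assoc, Nat.add_comm 1]

end ForcedRun

def HasDeepBinarySemigroup (n d : ℕ) : Prop :=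
  ∃ M₁ M₂ : Matrix (Fin n) (Fin n) ℕ,
    M₁ ≠ M₂ ∧
    (∀ p q, M₁ p q = 0 ∨ M₁ p q = 1) ∧
    (∀ p q, M₂ p q = 0 ∨ M₂ p q = 1) ∧
    {M : Matrix (Fin n) (Fin n) ℕ |
      ∃ w : List (Matrix (Fin n) (Fin n) ℕ),
        w ≠ [] ∧ (∀ X ∈ w, X = M₁ ∨ X = M₂) ∧ w.prod = M}.Finite ∧
    ∃ M : Matrix (Fin n) (Fin n) ℕ,
      (∃ w : List (Matrix (Fin n) (Fin n) ℕ),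
        w ≠ [] ∧ (∀ X ∈ w, X = M₁ ∨ X = M₂) ∧ w.prod = M) ∧
      (∀ w : List (Matrix (Fin n) (Fin n) ℕ),
        w ≠ [] → (∀ X ∈ w, X = M₁ ∨ X = M₂) → w.prod = M →
          d ≤ w.length)

lemma HasDeepBinarySemigroup.mono {n d d' : ℕ} (h : HasDeepBinarySemigroup n d) (hd : d' ≤ d) :
    HasDeepBinarySemigroup n d' := by
  obtain ⟨M₁, M₂, hne, h₁, h₂, hfin, M, hM, hdepth⟩ := h
  exact ⟨M₁, M₂, hne, h₁, h₂, hfin, M, hM, fun w h0 hw hprod => hd.trans (hdepth w h0 hw hprod)⟩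

theorem hasDeepBinarySemigroup_of_forcedRun {n : ℕ} {ι : Type*}
    (f : Bool → Fin n → Option (Fin n)) (ℓ : ℕ → Bool) (c : ι → ℕ → Fin n)
    (hstep : ∀ i τ, f (ℓ τ) (c i τ) = some (c i (τ + 1)))
    (hkill : ∀ τ, ∃ i, f (!ℓ τ) (c i τ) = none) {T : ℕ} (hT : T ≠ 0)
    (htime : ∀ τ, (∀ i, c i τ = c i T) → T ≤ τ) :
    HasDeepBinarySemigroup n T := by
  set canonical := (List.range' 0 T).map ℓ
  refine ⟨partialMatrix (f false), partialMatrix (f true), ?_,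
    partialMatrix_apply_eq_zero_or_one _, partialMatrix_apply_eq_zero_or_one _,
    finite_setOf_prod_partialMatrix f, partialMatrix (run f canonical),
    ⟨canonical.map _, by simpa [canonical] using hT, forall_mem_map_partialMatrix f canonical,
      prod_map_partialMatrix f canonical⟩, ?_⟩
  · obtain ⟨i, hi⟩ := hkill 0
    intro hA
    have hf : f (!ℓ 0) = f (ℓ 0) := by
      have := partialMatrix_injective hA
      cases ℓ 0 <;> simp [this]
    rw [hf, hstep] at hi
    exact Option.some_ne_none _ hi
  · intro w _ hw hprod
    obtain ⟨bs, hlen, hbs⟩ := exists_prod_eq_partialMatrix_run f hw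
    have hrun : run f bs = run f canonical := partialMatrix_injective (hbs.symm.trans hprod)
    have hcanonical (i : ι) : run f bs (c i 0) = some (c i T) := by
      rw [hrun, run_map_range' f ℓ c hstep, Nat.zero_add]
    have hlive (i : ι) := run_eq_some_of_ne_none f ℓ c hstep hkill bs 0
      (fun j => by simp [hcanonical]) i
    rw [← hlen]
    refine htime _ fun i => ?_
    simpa [hcanonical] using (hlive i).symm

theorem hasDeepBinarySemigroup_cycle {n T : ℕ} (hT : T ≠ 0) (hTn : T < n) :
    HasDeepBinarySemigroup n T := by
  have : NeZero n := ⟨by omega⟩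
  refine hasDeepBinarySemigroup_of_forcedRun (fun b x => if b then none else some (x + 1))
    (fun _ => false) (fun (_ : Unit) τ => Fin.ofNat n τ) (fun _ τ => ?_) (by simp) hT
    fun τ hτ => ?_
  · simp [Fin.ext_iff, Fin.val_add, Nat.add_mod]
  · have hval := congrArg Fin.val (hτ ())
    rw [Fin.val_ofNat, Fin.val_ofNat, Nat.mod_eq_of_lt hTn] at hval
    exact hval ▸ Nat.mod_le τ n

def digitOf (B s m : ℕ) : ℕ := s / B ^ m % B

/-- Whether adding one to `s` carries into digit `m`. -/
def carryOf (B s m : ℕ) : Bool := decide (B ^ m ∣ s + 1)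

section Digits

variable {B : ℕ}

lemma digitOf_lt (hB : 0 < B) (s m : ℕ) : digitOf B s m < B := Nat.mod_lt _ hB

lemma carryOf_zero (s : ℕ) : carryOf B s 0 = true := by simp [carryOf]

lemma digitOf_succ (s m : ℕ) :
    digitOf B (s + 1) m = (digitOf B s m + (carryOf B s m).toNat) % B := by
  rw [digitOf, digitOf, carryOf, Nat.succ_div, Nat.mod_add_mod]
  split_ifs <;> simp [*]

lemma carryOf_succ (hB : 0 < B) (s m : ℕ) :
    carryOf B s (m + 1) = decide (B ≤ digitOf B s m + (carryOf B s m).toNat) := by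
  have hdvd : B ^ (m + 1) ∣ s + 1 ↔ B ^ m ∣ s + 1 ∧ digitOf B (s + 1) m = 0 := by
    simp only [Nat.dvd_iff_mod_eq_zero, Nat.mod_pow_succ, digitOf, Nat.add_eq_zero_iff,
      mul_eq_zero, (pow_pos hB m).ne', false_or]
  have hd := digitOf_lt hB s m
  rw [carryOf, decide_eq_decide, hdvd, digitOf_succ]
  cases hc : carryOf B s m
  · simp only [carryOf, decide_eq_false_iff_not] at hc
    simp only [hc, false_and, false_iff]
    simpa using hd
  · simp only [carryOf, decide_eq_true_eq] at hc
    rcases (by omega : digitOf B s m + 1 < B ∨ digitOf B s m + 1 = B) with h | h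
    · simp [hc, Nat.mod_eq_of_lt h, h]
    · simp [hc, h]

lemma mod_pow_eq_of_digitOf_eq {s s' : ℕ} (K : ℕ) (h : ∀ m < K, digitOf B s m = digitOf B s' m) :
    s % B ^ K = s' % B ^ K := by
  induction K with
  | zero => simp [Nat.mod_one]
  | succ K ih =>
    rw [Nat.mod_pow_succ, Nat.mod_pow_succ, ih fun m hm => h m (by omega)]
    exact congrArg _ (congrArg _ (h K K.lt_succ_self))

end Digits

lemma mul_add_div_eq_and_mod_eq {R s r : ℕ} (hr : r < R) :
    (R * s + r) / R = s ∧ (R * s + r) % R = r :=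
  (Nat.div_mod_unique (by omega)).2 ⟨Nat.add_comm _ _, hr⟩

/-- `digit p t` is a digit of value `t` that will be processed after `p` more steps; processing
it turns it into `marker t' c`, its new value `t'` with the carry `c` it passes on, which only the
letter `c` lets through; `clock i` is the phase of the current sweep. -/
inductive CounterState
  | digit (dist value : ℕ)
  | marker (value : ℕ) (carry : Bool)
  | clock (phase : ℕ)

namespace CounterState

variable (B R : ℕ)

def step (b : Bool) : CounterState → Option CounterState
  | digit 0 t => some (marker ((t + b.toNat) % B) (decide (B ≤ t + b.toNat)))
  | digit (p + 1) t => some (digit p t)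
  | marker d c => if b = c then some (digit (R - 2) d) else none
  | clock i => if i = 0 ∧ b = false then none else some (clock ((i + 1) % R))

/-- The state of each token after `r` steps of the sweep that adds one to `s`: token `0` is the
clock and token `m + 1` holds digit `m`. -/
def conf (s r : ℕ) : ℕ → CounterState
  | 0 => clock r
  | m + 1 =>
    if r ≤ m then digit (m - r) (digitOf B s m)
    else if r = m + 1 then marker (digitOf B (s + 1) m) (carryOf B s (m + 1))
    else digit (R + m - r) (digitOf B (s + 1) m)

def confAt (τ tok : ℕ) : CounterState := conf B R (τ / R) (τ % R) tok

def letter (τ : ℕ) : Bool := carryOf B (τ / R) (τ % R)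

variable {B R}

lemma step_digit_of_ne_zero (b : Bool) {p : ℕ} (hp : p ≠ 0) (t : ℕ) :
    step B R b (digit p t) = some (digit (p - 1) t) := by
  obtain ⟨p, rfl⟩ := Nat.exists_eq_succ_of_ne_zero hp
  rfl

lemma step_digit_zero_digitOf (hB : 0 < B) (s m : ℕ) :
    step B R (carryOf B s m) (digit 0 (digitOf B s m)) =
      some (marker (digitOf B (s + 1) m) (carryOf B s (m + 1))) := by
  rw [step, digitOf_succ, carryOf_succ hB]

lemma step_conf_of_lt (hB : 0 < B) (s : ℕ) {r : ℕ} (hr : r + 1 < R) (tok : ℕ) :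
    step B R (carryOf B s r) (conf B R s r tok) = some (conf B R s (r + 1) tok) := by
  cases tok with
  | zero =>
    rcases r with _ | r
    · simp [conf, step, carryOf_zero, Nat.mod_eq_of_lt hr]
    · simp [conf, step, Nat.mod_eq_of_lt hr]
  | succ m =>
    rcases (by omega : r < m ∨ r = m ∨ r = m + 1 ∨ m + 1 < r) with h | rfl | rfl | h
    · simp only [conf, if_pos h.le, if_pos (Nat.succ_le_of_lt h)]
      rw [step_digit_of_ne_zero _ (by omega), Nat.sub_sub]
    · simp only [conf, le_refl, if_true, Nat.sub_self, if_false, Nat.not_succ_le_self,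
        step_digit_zero_digitOf hB]
    · simp [conf, step]
      omega
    · simp only [conf, if_neg (by omega : ¬ r ≤ m), if_neg (by omega : ¬ r = m + 1),
        if_neg (by omega : ¬ r + 1 ≤ m), if_neg (by omega : ¬ r + 1 = m + 1)]
      rw [step_digit_of_ne_zero _ (by omega), Nat.sub_sub]

lemma step_conf_last (hR : 2 ≤ R) (s : ℕ) {tok : ℕ} (htok : tok < R) :
    step B R (carryOf B s (R - 1)) (conf B R s (R - 1) tok) = some (conf B R (s + 1) 0 tok) := by
  cases tok with
  | zero => simp [conf, step, show R - 1 ≠ 0 by omega, show R - 1 + 1 = R by omega]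
  | succ m =>
    rcases (by omega : R - 1 = m + 1 ∨ m + 1 < R - 1) with h | h
    · simp [conf, step, h, show R - 2 = m by omega]
    · simp only [conf, if_neg (by omega : ¬ R - 1 ≤ m), if_neg (by omega : ¬ R - 1 = m + 1),
        Nat.zero_le, if_true]
      rw [step_digit_of_ne_zero _ (by omega), show R + m - (R - 1) - 1 = m by omega, Nat.sub_zero]

lemma exists_step_conf_eq_none (s : ℕ) {r : ℕ} (hr : r < R) :
    ∃ tok < R, step B R (!carryOf B s r) (conf B R s r tok) = none := by
  cases r with
  | zero => exact ⟨0, hr, by simp [conf, step, carryOf_zero]⟩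
  | succ m => exact ⟨m + 1, hr, by simp [conf, step]⟩

lemma step_confAt (hB : 0 < B) (hR : 2 ≤ R) (τ : ℕ) {tok : ℕ} (htok : tok < R) :
    step B R (letter B R τ) (confAt B R τ tok) = some (confAt B R (τ + 1) tok) := by
  obtain ⟨s, r, hr, rfl⟩ : ∃ s r, r < R ∧ τ = R * s + r :=
    ⟨τ / R, τ % R, Nat.mod_lt _ (by omega), (Nat.div_add_mod τ R).symm⟩
  have hsr := mul_add_div_eq_and_mod_eq (s := s) hr
  simp only [confAt, letter, hsr]
  rcases (by omega : r + 1 < R ∨ r = R - 1) with h | rfl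
  · rw [Nat.add_assoc, (mul_add_div_eq_and_mod_eq h).1, (mul_add_div_eq_and_mod_eq h).2,
      step_conf_of_lt hB s h]
  · have hsucc : R * s + (R - 1) + 1 = R * (s + 1) + 0 := by rw [Nat.mul_succ]; omega
    rw [hsucc, (mul_add_div_eq_and_mod_eq (by omega)).1, (mul_add_div_eq_and_mod_eq (by omega)).2,
      step_conf_last hR s htok]

lemma exists_step_confAt_eq_none (hR : 0 < R) (τ : ℕ) :
    ∃ tok < R, step B R (!letter B R τ) (confAt B R τ tok) = none :=
  exists_step_conf_eq_none _ (Nat.mod_lt τ hR)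

/-- The clock forces `τ ≡ 0 [MOD R]`, and the digits then force
`τ / R ≡ B ^ (R - 1) - 1 [MOD B ^ (R - 1)]`. -/
lemma le_of_confAt_eq (hB : 0 < B) (hR : 0 < R) {τ : ℕ}
    (h : ∀ tok < R, confAt B R τ tok = confAt B R (R * (B ^ (R - 1) - 1)) tok) :
    R * (B ^ (R - 1) - 1) ≤ τ := by
  set S := B ^ (R - 1) - 1
  have hT : confAt B R (R * S) = conf B R S 0 := by
    funext tok
    rw [confAt, ← Nat.add_zero (R * S), (mul_add_div_eq_and_mod_eq hR).1,
      (mul_add_div_eq_and_mod_eq hR).2]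
  simp only [hT] at h
  have hr : τ % R = 0 := by simpa [confAt, conf] using h 0 hR
  have hdigits (m : ℕ) (hm : m < R - 1) : digitOf B (τ / R) m = digitOf B S m := by
    simpa [confAt, conf, hr] using h (m + 1) (by omega)
  have hS : S ≤ τ / R := by
    have hmod := mod_pow_eq_of_digitOf_eq (R - 1) hdigits
    rw [Nat.mod_eq_of_lt (Nat.sub_lt (pow_pos hB _) Nat.one_pos)] at hmod
    calc S = τ / R % B ^ (R - 1) := hmod.symm
      _ ≤ τ / R := Nat.mod_le _ _
  exact (Nat.mul_le_mul_left R hS).trans (Nat.mul_div_le τ R)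

variable (B R)

def Valid : CounterState → Prop
  | digit p t => p + 2 ≤ R ∧ t < B
  | marker d _ => d < B
  | clock i => i < R

def encode : CounterState → ℕ
  | digit p t => B * p + t
  | marker d c => B * (R - 1 + c.toNat) + d
  | clock i => B * (R + 1) + i

def decode (x : ℕ) : CounterState :=
  if x / B + 1 < R then digit (x / B) (x % B)
  else if x / B ≤ R then marker (x % B) (decide (x / B = R))
  else clock (x - B * (R + 1))

def toFin (n : ℕ) (σ : CounterState) : Option (Fin n) :=
  if h : encode B R σ < n then some ⟨encode B R σ, h⟩ else none

def finStep (n : ℕ) (b : Bool) (x : Fin n) : Option (Fin n) :=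
  (step B R b (decode B R x)).bind (toFin B R n)

variable {B R}

lemma valid_conf (hB : 0 < B) (s : ℕ) {r tok : ℕ} (hr : r < R) (htok : tok < R) :
    Valid B R (conf B R s r tok) := by
  cases tok with
  | zero => exact hr
  | succ m =>
    simp only [conf]
    split_ifs
    · exact ⟨by omega, digitOf_lt hB s m⟩
    · exact digitOf_lt hB (s + 1) m
    · exact ⟨by omega, digitOf_lt hB (s + 1) m⟩

lemma decode_encode (hB : 0 < B) (hR : 1 ≤ R) {σ : CounterState} (hσ : Valid B R σ) :
    decode B R (encode B R σ) = σ := by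
  cases σ with
  | digit p t =>
    obtain ⟨hp, ht⟩ := hσ
    have hdiv : (B * p + t) / B = p := by rw [Nat.mul_add_div hB, Nat.div_eq_of_lt ht, Nat.add_zero]
    simp [decode, encode, hdiv, Nat.mod_eq_of_lt ht, show p + 1 < R by omega]
  | marker d c =>
    have hdiv : (B * (R - 1 + c.toNat) + d) / B = R - 1 + c.toNat := by
      rw [Nat.mul_add_div hB, Nat.div_eq_of_lt hσ, Nat.add_zero]
    have hmod : (B * (R - 1 + c.toNat) + d) % B = d := by
      rw [Nat.mul_add_mod, Nat.mod_eq_of_lt hσ]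
    simp only [decode, encode, hdiv, hmod]
    cases c
    · rw [Bool.toNat_false, Nat.add_zero, if_neg (by omega), if_pos (by omega)]
      simp only [marker.injEq, true_and, decide_eq_false_iff_not]
      omega
    · rw [Bool.toNat_true, if_neg (by omega), if_pos (by omega)]
      simp only [marker.injEq, true_and, decide_eq_true_eq]
      omega
  | clock i =>
    have hdiv : R + 1 ≤ (B * (R + 1) + i) / B := by
      rw [Nat.mul_add_div hB]; exact Nat.le_add_right _ _
    simp [decode, encode, show ¬ (B * (R + 1) + i) / B ≤ R by omega]
    omega

lemma encode_lt (hR : 1 ≤ R) {σ : CounterState} (hσ : Valid B R σ) :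
    encode B R σ < B * (R + 1) + R := by
  have hrow {p t : ℕ} (hp : p + 1 ≤ R + 1) (ht : t < B) : B * p + t < B * (R + 1) := by
    nlinarith [Nat.mul_le_mul_left B hp]
  cases σ with
  | digit p t => have := hrow (p := p) (by have := hσ.1; omega) hσ.2; simp only [encode]; omega
  | marker d c =>
    have := hrow (p := R - 1 + c.toNat) (by cases c <;> simp; omega) hσ
    simp only [encode]; omega
  | clock i => simp only [encode]; have : i < R := hσ; omega

lemma finStep_encode (hB : 0 < B) (hR : 1 ≤ R) {n : ℕ} (b : Bool) {σ : CounterState}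
    (hσ : Valid B R σ) (h : encode B R σ < n) :
    finStep B R n b ⟨encode B R σ, h⟩ = (step B R b σ).bind (toFin B R n) := by
  rw [finStep, decode_encode hB hR hσ]

end CounterState

theorem hasDeepBinarySemigroup_counter {B R n : ℕ} (hB : 2 ≤ B) (hR : 2 ≤ R)
    (hn : B * (R + 1) + R ≤ n) : HasDeepBinarySemigroup n (R * (B ^ (R - 1) - 1)) := by
  open CounterState in
  have hvalid (τ : ℕ) (i : Fin R) : Valid B R (confAt B R τ i) :=
    valid_conf (by omega) _ (Nat.mod_lt _ (by omega)) i.isLt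
  have hlt (τ : ℕ) (i : Fin R) : encode B R (confAt B R τ i) < n :=
    (encode_lt (by omega) (hvalid τ i)).trans_le hn
  refine hasDeepBinarySemigroup_of_forcedRun (finStep B R n) (letter B R)
    (fun (i : Fin R) τ => ⟨encode B R (confAt B R τ i), hlt τ i⟩) (fun i τ => ?_) (fun τ => ?_) ?_
    fun τ h => le_of_confAt_eq (by omega) (by omega) fun tok htok => ?_
  · rw [finStep_encode (by omega) (by omega) _ (hvalid τ i), step_confAt (by omega) hR τ i.isLt,
      Option.bind_some, toFin, dif_pos (hlt (τ + 1) i)]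
  · obtain ⟨tok, htok, hkill⟩ := exists_step_confAt_eq_none (B := B) (by omega : 0 < R) τ
    refine ⟨⟨tok, htok⟩, ?_⟩
    rw [finStep_encode (by omega) (by omega) _ (hvalid τ _), hkill, Option.bind_none]
  · exact Nat.mul_ne_zero (by omega) (by have := Nat.one_lt_pow (by omega : R - 1 ≠ 0) hB; omega)
  · have henc := congrArg (fun x : Fin n => decode B R x) (h ⟨tok, htok⟩)
    rwa [decode_encode (by omega) (by omega) (hvalid τ ⟨tok, htok⟩),
      decode_encode (by omega) (by omega) (hvalid _ ⟨tok, htok⟩)] at henc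

lemma four_pow_le_mul_four_pow_pred_sub_one {k : ℕ} (hk : 5 ≤ k) :
    4 ^ k ≤ k * (4 ^ (k - 1) - 1) := by
  obtain ⟨j, rfl⟩ : ∃ j, k = j + 1 := ⟨k - 1, by omega⟩
  have hpow : 4 ^ 4 ≤ 4 ^ j := Nat.pow_le_pow_right (by norm_num) (by omega)
  rw [Nat.add_sub_cancel, pow_succ]
  calc 4 ^ j * 4 ≤ 5 * (4 ^ j - 1) := by omega
    _ ≤ (j + 1) * (4 ^ j - 1) := Nat.mul_le_mul_right _ (by omega)

end BinaryDepth

/-- For every `n ≥ 9` with `n ≡ 4 (mod 5)`, there are two `n × n` matrices over `ℕ` with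
entries in `{0, 1}` generating a finite multiplicative semigroup in which some element has
depth at least `4 ^ ((n - 4) / 5)`: every nonempty product of generators equal to this
element has length at least `4 ^ ((n - 4) / 5)`. -/
theorem matrix_semigroup_depth_binary (n : ℕ) (hn : 9 ≤ n) (hmod : n % 5 = 4) :
    ∃ M₁ M₂ : Matrix (Fin n) (Fin n) ℕ,
      M₁ ≠ M₂ ∧
      (∀ p q, M₁ p q = 0 ∨ M₁ p q = 1) ∧
      (∀ p q, M₂ p q = 0 ∨ M₂ p q = 1) ∧
      {M : Matrix (Fin n) (Fin n) ℕ |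
        ∃ w : List (Matrix (Fin n) (Fin n) ℕ),
          w ≠ [] ∧ (∀ X ∈ w, X = M₁ ∨ X = M₂) ∧ w.prod = M}.Finite ∧
      ∃ M : Matrix (Fin n) (Fin n) ℕ,
        (∃ w : List (Matrix (Fin n) (Fin n) ℕ),
          w ≠ [] ∧ (∀ X ∈ w, X = M₁ ∨ X = M₂) ∧ w.prod = M) ∧
        (∀ w : List (Matrix (Fin n) (Fin n) ℕ),
          w ≠ [] → (∀ X ∈ w, X = M₁ ∨ X = M₂) → w.prod = M →
            4 ^ ((n - 4) / 5) ≤ w.length) := by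
  open BinaryDepth in
  obtain ⟨k, rfl⟩ : ∃ k, n = 5 * k + 4 := ⟨n / 5, by omega⟩
  rw [show (5 * k + 4 - 4) / 5 = k by omega]
  show HasDeepBinarySemigroup _ (4 ^ k)
  rcases (by omega : k = 1 ∨ (2 ≤ k ∧ k ≤ 4) ∨ 5 ≤ k) with rfl | ⟨hk2, hk4⟩ | hk5
  · exact hasDeepBinarySemigroup_cycle (by norm_num) (by norm_num)
  · refine (hasDeepBinarySemigroup_counter (B := 2) (R := (5 * k + 2) / 3) le_rfl (by omega)
      (by omega)).mono ?_
    interval_cases k <;> norm_num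
  · exact (hasDeepBinarySemigroup_counter (B := 4) (R := k) (by norm_num) (by omega)
      (by omega)).mono (four_pow_le_mul_four_pow_pred_sub_one hk5)
end
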